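/- Let C be a cocomplete category, D a small full subcategory of C, and consider the adjunction L ⊣ R between a reflective full subcategory E of presheaves on D and C, where R is fully faithful on representables and both L and R preserve colimits, with E generated under colimits by representables. Then the unit map e → R(L(e)) is an equivalence for every object e of E; i.e., L is fully faithful. -/

import Mathlib

open CategoryTheory CategoryTheory.Limits

universe v u

lemma CategoryTheory.Adjunction.isIso_unit_app_coconePt {A B J : Type*} [Category* A]
    [Category* B] [Category* J] {L : A ⥤ B} {R : B ⥤ A} (adj : L ⊣ R) {G : J ⥤ A}
    [PreservesColimit (G ⋙ L) R] (c : Cocone G) (hc : IsColimit c)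
    (h : ∀ j, IsIso (adj.unit.app (G.obj j))) : IsIso (adj.unit.app c.pt) := by
  have := adj.leftAdjoint_preservesColimits
  have : ∀ j, IsIso ((Functor.whiskerLeft G adj.unit).app j) := h
  have : IsIso (Functor.whiskerLeft G adj.unit) := NatIso.isIso_of_isIso_app _
  exact isIso_app_coconePt_of_preservesColimit G adj.unit c hc

theorem stmt_0_general {D : Type v} [SmallCategory D] {C : Type u} [Category.{v} C]
    (Z : (Dᵒᵖ ⥤ Type v) → Prop)
    (h_rep : ∀ d : D, Z (yoneda.obj d))
    (L : ObjectProperty.FullSubcategory Z ⥤ C) (R : C ⥤ ObjectProperty.FullSubcategory Z) (adj : L ⊣ R)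
    (hR : Nonempty (PreservesColimits R))
    (h_unit_rep : ∀ d : D, IsIso (adj.unit.app ⟨yoneda.obj d, h_rep d⟩))
    (h_gen : ∀ e : ObjectProperty.FullSubcategory Z, ∃ (K : Type v) (_ : SmallCategory K)
      (G : K ⥤ ObjectProperty.FullSubcategory Z) (c : Cocone G),
        Nonempty (IsColimit c) ∧ Nonempty (c.pt ≅ e) ∧
        ∀ k : K, ∃ d : D, Nonempty ((G.obj k).obj ≅ yoneda.obj d)) :
    ∀ e : ObjectProperty.FullSubcategory Z, IsIso (adj.unit.app e) := by
  intro e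
  obtain ⟨K, _, G, c, ⟨hc⟩, ⟨he⟩, hG⟩ := h_gen e
  obtain ⟨_⟩ := hR
  have hunit : ∀ k, IsIso (adj.unit.app (G.obj k)) := fun k => by
    obtain ⟨d, ⟨i⟩⟩ := hG k
    exact (NatTrans.isIso_app_iff_of_iso _ (ObjectProperty.isoMk (Y := ⟨_, h_rep d⟩) Z i)).2
      (h_unit_rep d)
  exact (NatTrans.isIso_app_iff_of_iso _ he).1 (adj.isIso_unit_app_coconePt c hc hunit)

/-- Let `C` be a cocomplete category, `D` a small full subcategory of `C` (given by a fully
faithful `ι : D ⥤ C`), and `E` a reflective full subcategory of presheaves on `D` containing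
the representables, with an adjunction `L ⊣ R` between `E` and `C` such that `R` preserves
colimits, the unit is an isomorphism on representable presheaves, and `E` is generated under
colimits by the representables. Then the unit `e ⟶ R(L(e))` is an isomorphism for every
object `e` of `E`; i.e. `L` is fully faithful. -/
theorem stmt_0 {D : Type v} [SmallCategory D] {C : Type u} [Category.{v} C]
    [HasColimits C] (ι : D ⥤ C) [ι.Full] [ι.Faithful]
    (Z : (Dᵒᵖ ⥤ Type v) → Prop)
    (h_rep : ∀ d : D, Z (yoneda.obj d))
    (L : ObjectProperty.FullSubcategory Z ⥤ C) (R : C ⥤ ObjectProperty.FullSubcategory Z) (adj : L ⊣ R)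
    (hL : Nonempty (PreservesColimits L)) (hR : Nonempty (PreservesColimits R))
    (hL_rep : ∀ d : D, Nonempty (L.obj ⟨yoneda.obj d, h_rep d⟩ ≅ ι.obj d))
    (h_unit_rep : ∀ d : D, IsIso (adj.unit.app ⟨yoneda.obj d, h_rep d⟩))
    (h_gen : ∀ e : ObjectProperty.FullSubcategory Z, ∃ (K : Type v) (_ : SmallCategory K)
      (G : K ⥤ ObjectProperty.FullSubcategory Z) (c : Cocone G),
        Nonempty (IsColimit c) ∧ Nonempty (c.pt ≅ e) ∧
        ∀ k : K, ∃ d : D, Nonempty ((G.obj k).obj ≅ yoneda.obj d)) :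
    ∀ e : ObjectProperty.FullSubcategory Z, IsIso (adj.unit.app e) :=
  stmt_0_general Z h_rep L R adj hR h_unit_rep h_gen
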